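/- arXiv:2501.16287 — 8 statements merged into one kernel-verified Lean document; each statement's English description precedes it below -/
import Mathlib

section
/- Let γ > 0 and let φ : [0,∞) → ℝ be strictly increasing and convex. Then the functional q ↦ φ(‖q‖_{1+γ}) is strictly convex on probability densities: for every t ∈ (0,1) and all probability densities p, q with ‖p‖_{1+γ} < ∞, ‖q‖_{1+γ} < ∞ that are not equal ν-almost everywhere, φ(‖t·q + (1−t)·p‖_{1+γ}) < t·φ(‖q‖_{1+γ}) + (1−t)·φ(‖p‖_{1+γ}). -/
open MeasureTheory Filter Real Topology Set

/-- A probability density w.r.t. a measure `ν`: measurable, nonnegative, integrating to 1. -/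
def IsProbDensity {X : Type*} [MeasurableSpace X] (ν : Measure X) (p : X → ℝ) : Prop :=
  Measurable p ∧ (∀ x, 0 ≤ p x) ∧ ∫ x, p x ∂ν = 1

/-- `⟨f^{1+γ}⟩ = ∫ f(x)^{1+γ} dν`. -/
noncomputable def powInt {X : Type*} [MeasurableSpace X] (ν : Measure X) (γ : ℝ) (p : X → ℝ) : ℝ :=
  ∫ x, p x ^ (1 + γ) ∂ν

/-- `‖f‖_{1+γ} = ⟨f^{1+γ}⟩^{1/(1+γ)}`. -/
noncomputable def lnorm {X : Type*} [MeasurableSpace X] (ν : Measure X) (γ : ℝ) (p : X → ℝ) : ℝ :=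
  (powInt ν γ p) ^ (1 / (1 + γ))

/-! Minkowski's inequality for `‖·‖_{1+γ}` is strict unless the two functions are proportional:
with `S = t ‖q‖ + (1-t) ‖p‖`, the mixture `t q + (1-t) p` is `S` times a convex combination of
the unit vectors `q / ‖q‖` and `p / ‖p‖`, whose `(1+γ)`-th moment is `< 1` by strict convexity
of `x ↦ x^{1+γ}`. Two probability densities are proportional only when they are equal, so
`‖t q + (1-t) p‖ < t ‖q‖ + (1-t) ‖p‖`, and monotonicity and convexity of `φ` conclude. -/

section

variable {X : Type*} [MeasurableSpace X] {ν : Measure X} {γ : ℝ} {f g p q : X → ℝ}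

lemma powInt_nonneg (hf : ∀ x, 0 ≤ f x) : 0 ≤ powInt ν γ f :=
  integral_nonneg fun x => rpow_nonneg (hf x) _

lemma lnorm_nonneg (hf : ∀ x, 0 ≤ f x) : 0 ≤ lnorm ν γ f :=
  rpow_nonneg (powInt_nonneg hf) _

lemma powInt_const_mul (hf : ∀ x, 0 ≤ f x) {c : ℝ} (hc : 0 ≤ c) :
    powInt ν γ (fun x => c * f x) = c ^ (1 + γ) * powInt ν γ f := by
  simp only [powInt, mul_rpow hc (hf _), integral_const_mul]

lemma lnorm_rpow (hγ : 1 + γ ≠ 0) (hf : ∀ x, 0 ≤ f x) :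
    lnorm ν γ f ^ (1 + γ) = powInt ν γ f := by
  rw [lnorm, ← rpow_mul (powInt_nonneg hf), one_div_mul_cancel hγ, rpow_one]

lemma lnorm_lt_iff_powInt_lt (hγ : 0 < 1 + γ) (hf : ∀ x, 0 ≤ f x) {S : ℝ} (hS : 0 ≤ S) :
    lnorm ν γ f < S ↔ powInt ν γ f < S ^ (1 + γ) := by
  rw [lnorm, one_div, rpow_inv_lt_iff_of_pos (powInt_nonneg hf) hS hγ]

lemma powInt_inv_lnorm_mul (hγ : 1 + γ ≠ 0) (hf : ∀ x, 0 ≤ f x) (hpos : 0 < lnorm ν γ f) :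
    powInt ν γ (fun x => (lnorm ν γ f)⁻¹ * f x) = 1 := by
  rw [powInt_const_mul hf (inv_nonneg.2 hpos.le), inv_rpow hpos.le, ← lnorm_rpow hγ hf,
    inv_mul_cancel₀ (rpow_pos_of_pos hpos _).ne']

lemma powInt_mul_add_mul_lt (hγ : 0 < γ) (hf : ∀ x, 0 ≤ f x) (hg : ∀ x, 0 ≤ g x)
    (hfm : AEMeasurable f ν) (hgm : AEMeasurable g ν)
    (hfI : Integrable (fun x => f x ^ (1 + γ)) ν) (hgI : Integrable (fun x => g x ^ (1 + γ)) ν)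
    (hne : ¬ f =ᵐ[ν] g) {a b : ℝ} (ha : 0 < a) (hb : 0 < b) (hab : a + b = 1) :
    powInt ν γ (fun x => a * f x + b * g x) < a * powInt ν γ f + b * powInt ν γ g := by
  have hr : 1 < 1 + γ := by linarith
  set u : X → ℝ := fun x => (a * f x + b * g x) ^ (1 + γ)
  set v : X → ℝ := fun x => a * f x ^ (1 + γ) + b * g x ^ (1 + γ)
  have hle : ∀ x, u x ≤ v x := fun x =>
    (convexOn_rpow hr.le).2 (hf x) (hg x) ha.le hb.le hab
  have hvI : Integrable v ν := (hfI.const_mul a).add (hgI.const_mul b)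
  have huI : Integrable u ν :=
    hvI.mono' (((hfm.const_mul a).add (hgm.const_mul b)).pow_const _).aestronglyMeasurable
      (ae_of_all _ fun x => by
        rw [norm_of_nonneg (rpow_nonneg (by have := hf x; have := hg x; positivity) _)]
        exact hle x)
  have huv : ¬ u =ᵐ[ν] v := fun h => hne <| h.mono fun x hx => by
    by_contra hfg
    exact (((strictConvexOn_rpow hr).2 (hf x) (hg x) hfg ha hb hab).trans_eq hx.symm).false
  calc powInt ν γ (fun x => a * f x + b * g x) = ∫ x, u x ∂ν := rfl
    _ < ∫ x, v x ∂ν := (integral_mono huI hvI hle).lt_of_ne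
        (mt (integral_eq_iff_of_ae_le huI hvI (ae_of_all _ hle)).1 huv)
    _ = a * powInt ν γ f + b * powInt ν γ g := by
        rw [integral_add (hfI.const_mul a) (hgI.const_mul b), integral_const_mul,
          integral_const_mul, powInt, powInt]

lemma lnorm_mul_add_mul_lt (hγ : 0 < γ) (hf : ∀ x, 0 ≤ f x) (hg : ∀ x, 0 ≤ g x)
    (hfm : AEMeasurable f ν) (hgm : AEMeasurable g ν)
    (hfI : Integrable (fun x => f x ^ (1 + γ)) ν) (hgI : Integrable (fun x => g x ^ (1 + γ)) ν)
    (hF : 0 < lnorm ν γ f) (hG : 0 < lnorm ν γ g)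
    (hne : ¬ (fun x => (lnorm ν γ f)⁻¹ * f x) =ᵐ[ν] fun x => (lnorm ν γ g)⁻¹ * g x)
    {a b : ℝ} (ha : 0 < a) (hb : 0 < b) :
    lnorm ν γ (fun x => a * f x + b * g x) < a * lnorm ν γ f + b * lnorm ν γ g := by
  have hr : 0 < 1 + γ := by linarith
  set F := lnorm ν γ f
  set G := lnorm ν γ g
  set S := a * F + b * G
  have hS : 0 < S := by positivity
  have hf' : ∀ x, 0 ≤ F⁻¹ * f x := fun x => mul_nonneg (inv_nonneg.2 hF.le) (hf x)
  have hg' : ∀ x, 0 ≤ G⁻¹ * g x := fun x => mul_nonneg (inv_nonneg.2 hG.le) (hg x)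
  have hf'I : Integrable (fun x => (F⁻¹ * f x) ^ (1 + γ)) ν := by
    simp_rw [mul_rpow (inv_nonneg.2 hF.le) (hf _)]
    exact hfI.const_mul _
  have hg'I : Integrable (fun x => (G⁻¹ * g x) ^ (1 + γ)) ν := by
    simp_rw [mul_rpow (inv_nonneg.2 hG.le) (hg _)]
    exact hgI.const_mul _
  have hmix : (fun x => a * f x + b * g x)
      = fun x => S * (a * F / S * (F⁻¹ * f x) + b * G / S * (G⁻¹ * g x)) := by
    funext x
    field_simp
  have hconv := powInt_mul_add_mul_lt hγ hf' hg' (hfm.const_mul _) (hgm.const_mul _)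
    hf'I hg'I hne (by positivity : 0 < a * F / S) (by positivity : 0 < b * G / S)
    (by rw [← add_div, div_self hS.ne'])
  rw [powInt_inv_lnorm_mul hr.ne' hf hF, powInt_inv_lnorm_mul hr.ne' hg hG] at hconv
  rw [lnorm_lt_iff_powInt_lt hr (fun x => by have := hf x; have := hg x; positivity) hS.le, hmix,
    powInt_const_mul (fun x => by have := hf' x; have := hg' x; positivity) hS.le]
  calc S ^ (1 + γ) * powInt ν γ (fun x => a * F / S * (F⁻¹ * f x) + b * G / S * (G⁻¹ * g x))
      < S ^ (1 + γ) * (a * F / S * 1 + b * G / S * 1) :=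
        mul_lt_mul_of_pos_left hconv (rpow_pos_of_pos hS _)
    _ = S ^ (1 + γ) := by rw [mul_one, mul_one, ← add_div, div_self hS.ne', mul_one]

lemma IsProbDensity.powInt_pos (hp : IsProbDensity ν p)
    (hpI : Integrable (fun x => p x ^ (1 + γ)) ν) : 0 < powInt ν γ p := by
  obtain ⟨-, hp0, hp1⟩ := hp
  have hpInt : Integrable p ν := .of_integral_ne_zero (by rw [hp1]; exact one_ne_zero)
  have hsupp : 0 < ν (Function.support p) :=
    (integral_pos_iff_support_of_nonneg hp0 hpInt).1 (hp1 ▸ one_pos)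
  refine (integral_pos_iff_support_of_nonneg (fun x => rpow_nonneg (hp0 x) _) hpI).2
    (hsupp.trans_le (measure_mono fun x hx => ?_))
  exact (rpow_pos_of_pos ((hp0 x).lt_of_ne' hx) _).ne'

lemma IsProbDensity.ae_eq_of_const_mul_ae_eq (hq : IsProbDensity ν q) (hp : IsProbDensity ν p)
    {c d : ℝ} (hc : c ≠ 0) (h : (fun x => c * q x) =ᵐ[ν] fun x => d * p x) : q =ᵐ[ν] p := by
  have hcd : c = d := by
    simpa [integral_const_mul, hq.2.2, hp.2.2] using integral_congr_ae h
  subst hcd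
  exact h.mono fun x hx => mul_left_cancel₀ hc hx

end

theorem phi_lnorm_strictly_convex_general {X : Type*} [MeasurableSpace X] (ν : Measure X)
    (γ : ℝ) (hγ : 0 < γ)
    (φ : ℝ → ℝ) (hφmono : StrictMonoOn φ (Set.Ici 0)) (hφconv : ConvexOn ℝ (Set.Ici 0) φ)
    (t : ℝ) (ht0 : 0 < t) (ht1 : t < 1)
    (p q : X → ℝ) (hp : IsProbDensity ν p) (hq : IsProbDensity ν q)
    (hpI : Integrable (fun x => p x ^ (1 + γ)) ν)
    (hqI : Integrable (fun x => q x ^ (1 + γ)) ν)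
    (hne : ¬ q =ᵐ[ν] p) :
    φ (lnorm ν γ (fun x => t * q x + (1 - t) * p x)) <
      t * φ (lnorm ν γ q) + (1 - t) * φ (lnorm ν γ p) := by
  have hs : 0 < 1 - t := sub_pos.2 ht1
  have hNq : 0 < lnorm ν γ q := rpow_pos_of_pos (hq.powInt_pos hqI) _
  have hNp : 0 < lnorm ν γ p := rpow_pos_of_pos (hp.powInt_pos hpI) _
  have hmix_nonneg : ∀ x, 0 ≤ t * q x + (1 - t) * p x := fun x => by
    have := hq.2.1 x; have := hp.2.1 x; positivity
  have hminkowski := lnorm_mul_add_mul_lt hγ hq.2.1 hp.2.1 hq.1.aemeasurable hp.1.aemeasurable hqI hpI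
    hNq hNp (mt (hq.ae_eq_of_const_mul_ae_eq hp (inv_ne_zero hNq.ne')) hne) ht0 hs
  calc φ (lnorm ν γ (fun x => t * q x + (1 - t) * p x))
      < φ (t * lnorm ν γ q + (1 - t) * lnorm ν γ p) :=
        hφmono (lnorm_nonneg hmix_nonneg) (mem_Ici.2 (by positivity)) hminkowski
    _ ≤ t * φ (lnorm ν γ q) + (1 - t) * φ (lnorm ν γ p) :=
        hφconv.2 hNq.le hNp.le ht0.le hs.le (add_sub_cancel t 1)

/-- for φ strictly increasing and convex on `[0,∞)`, the functional
`q ↦ φ(‖q‖_{1+γ})` is strictly convex on probability densities. -/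
theorem phi_lnorm_strictly_convex {X : Type*} [MeasurableSpace X] (ν : Measure X) [SigmaFinite ν]
    (γ : ℝ) (hγ : 0 < γ)
    (φ : ℝ → ℝ) (hφmono : StrictMonoOn φ (Set.Ici 0)) (hφconv : ConvexOn ℝ (Set.Ici 0) φ)
    (t : ℝ) (ht0 : 0 < t) (ht1 : t < 1)
    (p q : X → ℝ) (hp : IsProbDensity ν p) (hq : IsProbDensity ν q)
    (hpI : Integrable (fun x => p x ^ (1 + γ)) ν)
    (hqI : Integrable (fun x => q x ^ (1 + γ)) ν)
    (hne : ¬ q =ᵐ[ν] p) :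
    φ (lnorm ν γ (fun x => t * q x + (1 - t) * p x)) <
      t * φ (lnorm ν γ q) + (1 - t) * φ (lnorm ν γ p) :=
  phi_lnorm_strictly_convex_general ν γ hγ φ hφmono hφconv t ht0 ht1 p q hp hq hpI hqI hne
end

section
/- Let γ > 0 and let φ : [0,∞) → ℝ be strictly increasing, convex, and differentiable. Let p, q be probability densities with 0 < ‖p‖_{1+γ} < ∞ and ‖q‖_{1+γ} < ∞. Then the norm-based Bregman density power divergence D^{NB}_{φ,γ}(q,p) = (φ(‖q‖_{1+γ}) − φ(‖p‖_{1+γ}))/γ − φ'(‖p‖_{1+γ})·(⟨q p^γ⟩ − ⟨p^{1+γ}⟩)/(γ·‖p‖_{1+γ}^γ) satisfies D^{NB}_{φ,γ}(q,p) ≥ 0, and D^{NB}_{φ,γ}(q,p) = 0 if and only if q = p ν-almost everywhere. -/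
open MeasureTheory Filter Real Topology Set

/-- `⟨q p^γ⟩ = ∫ q(x) p(x)^γ dν`. -/
noncomputable def crossInt {X : Type*} [MeasurableSpace X] (ν : Measure X) (γ : ℝ)
    (q p : X → ℝ) : ℝ :=
  ∫ x, q x * p x ^ γ ∂ν

/-! Write `N_f = ‖f‖_{1+γ}`. Since `⟨p^{1+γ}⟩ = N_p · N_p^γ`, `γ D` is the sum of the Bregman
divergence `φ(N_q) - φ(N_p) - φ'(N_p)(N_q - N_p) ≥ 0` of the convex `φ` and of
`φ'(N_p) (N_q - ⟨q p^γ⟩ / N_p^γ)`, where `φ'(N_p) > 0` because `φ` is strictly increasing and the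
bracket is nonnegative by Hölder's inequality. Hölder's inequality comes from integrating the
pointwise Young gap of `q / N_q` and `p / N_p`; when it is an equality that gap vanishes a.e., so
`q / N_q = p / N_p` a.e., and `⟨q⟩ = ⟨p⟩ = 1` forces `q = p` a.e. -/

-- The slack in Young's inequality `a b^γ ≤ a^r / r + (b^γ)^s / s` for the conjugate exponents
-- `r = 1 + γ`, `s = (1 + γ) / γ`.
noncomputable def youngGap (γ a b : ℝ) : ℝ := (a ^ (1 + γ) + γ * b ^ (1 + γ)) / (1 + γ) - a * b ^ γ

section YoungGap

variable {γ a b : ℝ}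

lemma youngGap_eq_arith_mean_sub_geom_mean (ha : 0 ≤ a) (hb : 0 ≤ b) (hγ : 0 < γ) :
    youngGap γ a b = ((1 + γ)⁻¹ * a ^ (1 + γ) + γ / (1 + γ) * b ^ (1 + γ))
      - (a ^ (1 + γ)) ^ (1 + γ)⁻¹ * (b ^ (1 + γ)) ^ (γ / (1 + γ)) := by
  have h1γ : 1 + γ ≠ 0 := by linarith
  rw [youngGap, rpow_rpow_inv ha h1γ, ← rpow_mul hb, mul_div_cancel₀ γ h1γ]
  field_simp

lemma youngGap_nonneg (ha : 0 ≤ a) (hb : 0 ≤ b) (hγ : 0 < γ) : 0 ≤ youngGap γ a b := by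
  rw [youngGap_eq_arith_mean_sub_geom_mean ha hb hγ, sub_nonneg]
  exact geom_mean_le_arith_mean2_weighted (by positivity) (by positivity) (by positivity)
    (by positivity) (by field_simp)

lemma youngGap_eq_zero_iff (ha : 0 ≤ a) (hb : 0 ≤ b) (hγ : 0 < γ) :
    youngGap γ a b = 0 ↔ a = b := by
  rw [youngGap_eq_arith_mean_sub_geom_mean ha hb hγ, sub_eq_zero, eq_comm,
    geom_mean_eq_arith_mean2_weighted_iff_of_pos (by positivity) (by positivity)
      (by positivity) (by positivity) (by field_simp),
    rpow_left_inj ha hb (by linarith)]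

lemma youngGap_div {u v : ℝ} (hu : 0 ≤ u) (hv : 0 ≤ v) (ha : 0 ≤ a) (hb : 0 ≤ b) :
    youngGap γ (u / a) (v / b)
      = (u ^ (1 + γ) / a ^ (1 + γ) + γ * (v ^ (1 + γ) / b ^ (1 + γ))) / (1 + γ)
        - u * v ^ γ / (a * b ^ γ) := by
  rw [youngGap, div_rpow hu ha, div_rpow hv hb, div_rpow hv hb, div_mul_div_comm]

end YoungGap

lemma ConvexOn.add_deriv_mul_sub_le {S : Set ℝ} {f : ℝ → ℝ} (hf : ConvexOn ℝ S f) {x y : ℝ}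
    (hx : x ∈ S) (hy : y ∈ S) (hfx : DifferentiableAt ℝ f x) :
    f x + deriv f x * (y - x) ≤ f y := by
  rcases lt_trichotomy x y with hxy | rfl | hyx
  · have h := hf.deriv_le_slope hx hy hxy hfx
    rw [slope_def_field, le_div_iff₀ (sub_pos.2 hxy)] at h
    linarith
  · simp
  · have h := hf.slope_le_deriv hy hx hyx hfx
    rw [slope_def_field, div_le_iff₀ (sub_pos.2 hyx)] at h
    linarith

lemma ConvexOn.deriv_pos_of_strictMonoOn {S : Set ℝ} {f : ℝ → ℝ} (hf : ConvexOn ℝ S f)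
    (hmono : StrictMonoOn f S) {x y : ℝ} (hy : y ∈ S) (hx : x ∈ S) (hyx : y < x)
    (hfx : DifferentiableAt ℝ f x) : 0 < deriv f x := by
  have hslope : 0 < slope f y x := by
    rw [slope_def_field]
    exact div_pos (sub_pos.2 (hmono hy hx hyx)) (sub_pos.2 hyx)
  exact hslope.trans_le (hf.slope_le_deriv hy hx hyx hfx)

section Holder

variable {X : Type*} [MeasurableSpace X] {ν : Measure X} {γ : ℝ} {f g : X → ℝ}

lemma lnorm_rpow_one_add (hf : 0 ≤ powInt ν γ f) (hγ : 1 + γ ≠ 0) :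
    lnorm ν γ f ^ (1 + γ) = powInt ν γ f := by
  rw [lnorm, one_div, rpow_inv_rpow hf hγ]

lemma lnorm_pos (hf : 0 < powInt ν γ f) : 0 < lnorm ν γ f := rpow_pos_of_pos hf _

lemma crossInt_self (hf0 : ∀ x, 0 ≤ f x) (hγ : 1 + γ ≠ 0) : crossInt ν γ f f = powInt ν γ f := by
  refine integral_congr_ae (Eventually.of_forall fun x => ?_)
  simp only [rpow_add' (hf0 x) hγ, rpow_one]

lemma powInt_pos (hγ : 1 + γ ≠ 0) (hf0 : ∀ x, 0 ≤ f x) (hf : ∫ x, f x ∂ν ≠ 0)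
    (hfI : Integrable (fun x => f x ^ (1 + γ)) ν) : 0 < powInt ν γ f := by
  refine (integral_nonneg fun x => rpow_nonneg (hf0 x) _).lt_of_ne fun h => hf ?_
  have hpow := (integral_eq_zero_iff_of_nonneg (fun x => rpow_nonneg (hf0 x) _) hfI).1 h.symm
  refine integral_eq_zero_of_ae ?_
  filter_upwards [hpow] with x hx
  exact (rpow_eq_zero (hf0 x) hγ).1 hx

lemma integrable_youngGap {a b : ℝ} (ha : 0 ≤ a) (hb : 0 ≤ b) (hf0 : ∀ x, 0 ≤ f x)
    (hg0 : ∀ x, 0 ≤ g x) (hfI : Integrable (fun x => f x ^ (1 + γ)) ν)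
    (hgI : Integrable (fun x => g x ^ (1 + γ)) ν) (hfgI : Integrable (fun x => f x * g x ^ γ) ν) :
    Integrable (fun x => youngGap γ (f x / a) (g x / b)) ν := by
  simp_rw [youngGap_div (hf0 _) (hg0 _) ha hb]
  exact (((hfI.div_const _).add ((hgI.div_const _).const_mul γ)).div_const _).sub
    (hfgI.div_const _)

lemma integral_youngGap {a b : ℝ} (ha : 0 ≤ a) (hb : 0 ≤ b) (hf0 : ∀ x, 0 ≤ f x)
    (hg0 : ∀ x, 0 ≤ g x) (hfI : Integrable (fun x => f x ^ (1 + γ)) ν)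
    (hgI : Integrable (fun x => g x ^ (1 + γ)) ν) (hfgI : Integrable (fun x => f x * g x ^ γ) ν) :
    ∫ x, youngGap γ (f x / a) (g x / b) ∂ν
      = (powInt ν γ f / a ^ (1 + γ) + γ * (powInt ν γ g / b ^ (1 + γ))) / (1 + γ)
        - crossInt ν γ f g / (a * b ^ γ) := by
  have hsumI : Integrable (fun x =>
      (f x ^ (1 + γ) / a ^ (1 + γ) + γ * (g x ^ (1 + γ) / b ^ (1 + γ))) / (1 + γ)) ν :=
    ((hfI.div_const _).add ((hgI.div_const _).const_mul γ)).div_const _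
  simp_rw [youngGap_div (hf0 _) (hg0 _) ha hb]
  rw [integral_sub hsumI (hfgI.div_const _), integral_div, integral_add (hfI.div_const _)
      ((hgI.div_const _).const_mul γ), integral_const_mul, integral_div, integral_div,
    integral_div]
  rfl

lemma integral_youngGap_lnorm (hγ : 0 < γ) (hf0 : ∀ x, 0 ≤ f x) (hg0 : ∀ x, 0 ≤ g x)
    (hfpos : 0 < powInt ν γ f) (hgpos : 0 < powInt ν γ g)
    (hfI : Integrable (fun x => f x ^ (1 + γ)) ν) (hgI : Integrable (fun x => g x ^ (1 + γ)) ν)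
    (hfgI : Integrable (fun x => f x * g x ^ γ) ν) :
    ∫ x, youngGap γ (f x / lnorm ν γ f) (g x / lnorm ν γ g) ∂ν
      = 1 - crossInt ν γ f g / (lnorm ν γ f * lnorm ν γ g ^ γ) := by
  have h1γ : 1 + γ ≠ 0 := by linarith
  rw [integral_youngGap (lnorm_pos hfpos).le (lnorm_pos hgpos).le hf0 hg0 hfI hgI hfgI,
    lnorm_rpow_one_add hfpos.le h1γ, lnorm_rpow_one_add hgpos.le h1γ, div_self hfpos.ne',
    div_self hgpos.ne', mul_one, div_self h1γ]

theorem crossInt_le_lnorm_mul_rpow (hγ : 0 < γ) (hf0 : ∀ x, 0 ≤ f x) (hg0 : ∀ x, 0 ≤ g x)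
    (hfpos : 0 < powInt ν γ f) (hgpos : 0 < powInt ν γ g)
    (hfI : Integrable (fun x => f x ^ (1 + γ)) ν) (hgI : Integrable (fun x => g x ^ (1 + γ)) ν)
    (hfgI : Integrable (fun x => f x * g x ^ γ) ν) :
    crossInt ν γ f g ≤ lnorm ν γ f * lnorm ν γ g ^ γ := by
  have hNf := lnorm_pos hfpos
  have hNg := lnorm_pos hgpos
  have h : 0 ≤ ∫ x, youngGap γ (f x / lnorm ν γ f) (g x / lnorm ν γ g) ∂ν :=
    integral_nonneg fun x =>
      youngGap_nonneg (div_nonneg (hf0 x) hNf.le) (div_nonneg (hg0 x) hNg.le) hγ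
  rwa [integral_youngGap_lnorm hγ hf0 hg0 hfpos hgpos hfI hgI hfgI, sub_nonneg,
    div_le_one (by positivity)] at h

theorem ae_eq_const_mul_of_crossInt_eq (hγ : 0 < γ) (hf0 : ∀ x, 0 ≤ f x) (hg0 : ∀ x, 0 ≤ g x)
    (hfpos : 0 < powInt ν γ f) (hgpos : 0 < powInt ν γ g)
    (hfI : Integrable (fun x => f x ^ (1 + γ)) ν) (hgI : Integrable (fun x => g x ^ (1 + γ)) ν)
    (hfgI : Integrable (fun x => f x * g x ^ γ) ν)
    (heq : crossInt ν γ f g = lnorm ν γ f * lnorm ν γ g ^ γ) :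
    f =ᵐ[ν] fun x => lnorm ν γ f / lnorm ν γ g * g x := by
  have hNf := lnorm_pos hfpos
  have hNg := lnorm_pos hgpos
  have hgap : ∫ x, youngGap γ (f x / lnorm ν γ f) (g x / lnorm ν γ g) ∂ν = 0 := by
    rw [integral_youngGap_lnorm hγ hf0 hg0 hfpos hgpos hfI hgI hfgI, heq,
      div_self (by positivity), sub_self]
  have hgap0 := (integral_eq_zero_iff_of_nonneg
    (fun x => youngGap_nonneg (div_nonneg (hf0 x) hNf.le) (div_nonneg (hg0 x) hNg.le) hγ)
    (integrable_youngGap hNf.le hNg.le hf0 hg0 hfI hgI hfgI)).1 hgap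
  filter_upwards [hgap0] with x hx
  have hx := (youngGap_eq_zero_iff (div_nonneg (hf0 x) hNf.le) (div_nonneg (hg0 x) hNg.le) hγ).1 hx
  field_simp at hx ⊢
  linarith

theorem ae_eq_of_crossInt_eq (hγ : 0 < γ) (hf0 : ∀ x, 0 ≤ f x) (hg0 : ∀ x, 0 ≤ g x)
    (hfpos : 0 < powInt ν γ f) (hgpos : 0 < powInt ν γ g)
    (hfI : Integrable (fun x => f x ^ (1 + γ)) ν) (hgI : Integrable (fun x => g x ^ (1 + γ)) ν)
    (hfgI : Integrable (fun x => f x * g x ^ γ) ν)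
    (hfg : ∫ x, f x ∂ν = ∫ x, g x ∂ν) (hg : ∫ x, g x ∂ν ≠ 0)
    (heq : crossInt ν γ f g = lnorm ν γ f * lnorm ν γ g ^ γ) : f =ᵐ[ν] g := by
  have hfc := ae_eq_const_mul_of_crossInt_eq hγ hf0 hg0 hfpos hgpos hfI hgI hfgI heq
  have hc : lnorm ν γ f / lnorm ν γ g = 1 := by
    rw [integral_congr_ae hfc, integral_const_mul] at hfg
    exact (mul_eq_right₀ hg).1 hfg
  simpa only [hc, one_mul] using hfc

end Holder

theorem nbdpd_nonneg_eq_zero_iff_general {X : Type*} [MeasurableSpace X] (ν : Measure X)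
    (γ : ℝ) (hγ : 0 < γ)
    (φ : ℝ → ℝ) (hφmono : StrictMonoOn φ (Set.Ici 0)) (hφconv : ConvexOn ℝ (Set.Ici 0) φ)
    (hφdiff : Differentiable ℝ φ)
    (p q : X → ℝ) (hp : IsProbDensity ν p) (hq : IsProbDensity ν q)
    (hppos : 0 < powInt ν γ p)
    (hpI : Integrable (fun x => p x ^ (1 + γ)) ν)
    (hqI : Integrable (fun x => q x ^ (1 + γ)) ν)
    (hqpI : Integrable (fun x => q x * p x ^ γ) ν) :
    let D := (φ (lnorm ν γ q) - φ (lnorm ν γ p)) / γ -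
      deriv φ (lnorm ν γ p) * (crossInt ν γ q p - powInt ν γ p) / (γ * lnorm ν γ p ^ γ)
    0 ≤ D ∧ (D = 0 ↔ q =ᵐ[ν] p) := by
  intro D
  obtain ⟨-, hp0, hp1⟩ := hp
  obtain ⟨-, hq0, hq1⟩ := hq
  have h1γ : 1 + γ ≠ 0 := by linarith
  have hqpos : 0 < powInt ν γ q := powInt_pos h1γ hq0 (by simp [hq1]) hqI
  have hNp := lnorm_pos hppos
  have hc : 0 < deriv φ (lnorm ν γ p) :=
    hφconv.deriv_pos_of_strictMonoOn hφmono self_mem_Ici hNp.le hNp (hφdiff _)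
  have hbregman : 0 ≤ φ (lnorm ν γ q) - φ (lnorm ν γ p)
      - deriv φ (lnorm ν γ p) * (lnorm ν γ q - lnorm ν γ p) := by
    linarith [hφconv.add_deriv_mul_sub_le hNp.le (lnorm_pos hqpos).le (hφdiff _)]
  have hholder : 0 ≤ lnorm ν γ q * lnorm ν γ p ^ γ - crossInt ν γ q p :=
    sub_nonneg.2 (crossInt_le_lnorm_mul_rpow hγ hq0 hp0 hqpos hppos hqI hpI hqpI)
  -- `D` splits into a Bregman divergence of `φ` and a Hölder gap, because `⟨p^{1+γ}⟩ = ‖p‖ ‖p‖^γ`.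
  have hdecomp : D = (φ (lnorm ν γ q) - φ (lnorm ν γ p)
      - deriv φ (lnorm ν γ p) * (lnorm ν γ q - lnorm ν γ p)) / γ
      + deriv φ (lnorm ν γ p) * (lnorm ν γ q * lnorm ν γ p ^ γ - crossInt ν γ q p)
        / (γ * lnorm ν γ p ^ γ) := by
    simp only [D]
    rw [← lnorm_rpow_one_add hppos.le h1γ, rpow_add' hNp.le h1γ, rpow_one]
    field_simp
    ring
  have hbregman_div := div_nonneg hbregman hγ.le
  have hholder_div :=
    div_nonneg (mul_nonneg hc.le hholder) (by positivity : 0 ≤ γ * lnorm ν γ p ^ γ)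
  refine ⟨hdecomp ▸ add_nonneg hbregman_div hholder_div, fun hD => ?_, fun hqp => ?_⟩
  · have hgap := ((add_eq_zero_iff_of_nonneg hbregman_div hholder_div).1 (hdecomp ▸ hD)).2
    have hcross : crossInt ν γ q p = lnorm ν γ q * lnorm ν γ p ^ γ := by
      rw [div_eq_zero_iff, mul_eq_zero, sub_eq_zero] at hgap
      exact ((hgap.resolve_right (by positivity)).resolve_left hc.ne').symm
    exact ae_eq_of_crossInt_eq hγ hq0 hp0 hqpos hppos hqI hpI hqpI (hq1.trans hp1.symm)
      (by simp [hp1]) hcross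
  · have hpow : powInt ν γ q = powInt ν γ p := integral_congr_ae (hqp.fun_comp (· ^ (1 + γ)))
    have hlnorm : lnorm ν γ q = lnorm ν γ p := by rw [lnorm, lnorm, hpow]
    have hcross : crossInt ν γ q p = powInt ν γ p :=
      (integral_congr_ae (hqp.mono fun x hx => by simp only [hx])).trans (crossInt_self hp0 h1γ)
    simp only [D, hlnorm, hcross, sub_self, zero_div, mul_zero]

/-- the norm-based Bregman density power divergence is nonnegative and
vanishes exactly when the two densities coincide ν-a.e. -/
theorem nbdpd_nonneg_eq_zero_iff {X : Type*} [MeasurableSpace X] (ν : Measure X) [SigmaFinite ν]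
    (γ : ℝ) (hγ : 0 < γ)
    (φ : ℝ → ℝ) (hφmono : StrictMonoOn φ (Set.Ici 0)) (hφconv : ConvexOn ℝ (Set.Ici 0) φ)
    (hφdiff : Differentiable ℝ φ)
    (p q : X → ℝ) (hp : IsProbDensity ν p) (hq : IsProbDensity ν q)
    (hppos : 0 < powInt ν γ p)
    (hpI : Integrable (fun x => p x ^ (1 + γ)) ν)
    (hqI : Integrable (fun x => q x ^ (1 + γ)) ν)
    (hqpI : Integrable (fun x => q x * p x ^ γ) ν) :
    let D := (φ (lnorm ν γ q) - φ (lnorm ν γ p)) / γ -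
      deriv φ (lnorm ν γ p) * (crossInt ν γ q p - powInt ν γ p) / (γ * lnorm ν γ p ^ γ)
    0 ≤ D ∧ (D = 0 ↔ q =ᵐ[ν] p) :=
  nbdpd_nonneg_eq_zero_iff_general ν γ hγ φ hφmono hφconv hφdiff p q hp hq hppos hpI hqI hqpI
end

section
/- Let (γ, z) ↦ φ_γ(z) be a family of functions φ_γ : [0,∞) → ℝ, each differentiable, let p, q be probability densities with ‖p‖_{1+γ}, ‖q‖_{1+γ} ∈ (0,∞) and ⟨q p^γ⟩ < ∞ for all sufficiently small γ > 0, with ⟨q log p⟩, ⟨q log q⟩ and ⟨p log p⟩ finite, and let c ∈ ℝ. Assume: (i) lim_{γ→0⁺} (⟨q p^γ⟩ − 1)/γ = ⟨q log p⟩; (ii) lim_{γ→0⁺} (⟨p^{1+γ}⟩ − 1)/γ = ⟨p log p⟩ and lim_{γ→0⁺} (⟨q^{1+γ}⟩ − 1)/γ = ⟨q log q⟩; (iii) lim_{γ→0⁺} ‖p‖_{1+γ}^γ = 1 and lim_{γ→0⁺} ‖q‖_{1+γ}^γ = 1; (iv) lim_{γ→0⁺} φ_γ'(‖p‖_{1+γ})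 = φ_0'(1) and lim_{γ→0⁺} φ_γ'(‖q‖_{1+γ}) = φ_0'(1); (v) lim_{γ→0⁺} (φ_γ(‖p‖_{1+γ}) − φ_0(1))/γ = φ_0'(1)·⟨p log p⟩ + c and lim_{γ→0⁺} (φ_γ(‖q‖_{1+γ}) − φ_0(1))/γ = φ_0'(1)·⟨q log q⟩ + c. Then the norm-based Bregman density power divergence satisfies lim_{γ→0⁺} D^{NB}_{φ,γ}(q,p) = φ_0'(1)·⟨q log(q/p)⟩, i.e., it converges to a constant multiple of the Kullback–Leibler divergence. -/
open MeasureTheory Filter Real Topology Set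

/-- The norm-based Bregman density power divergence (NB-DPD), for `γ > 0`:
`D^{NB}_{φ,γ}(q,p) = (φ_γ(‖q‖) − φ_γ(‖p‖))/γ − φ_γ'(‖p‖)(⟨q p^γ⟩ − ⟨p^{1+γ}⟩)/(γ‖p‖^γ)`. -/
noncomputable def DNB {X : Type*} [MeasurableSpace X] (ν : Measure X) (φ : ℝ → ℝ → ℝ) (γ : ℝ)
    (q p : X → ℝ) : ℝ :=
  (φ γ (lnorm ν γ q) - φ γ (lnorm ν γ p)) / γ -
    deriv (φ γ) (lnorm ν γ p) * (crossInt ν γ q p - powInt ν γ p) / (γ * lnorm ν γ p ^ γ)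

/-!
The only delicate point is the Kullback–Leibler limit itself: with Lean's `log 0 = 0`, the identity
`⟨q log (q/p)⟩ = ⟨q log q⟩ - ⟨q log p⟩` needs `q = 0` a.e. on `{p = 0}`. This follows from (i):
since `(t^γ - 1)/γ` is monotone in `γ`, for `0 < γ ≤ γ₀`
`⟨q p^γ⟩ - ⟨q⟩ ≤ (γ/γ₀) ⟨q p^γ₀⟩ - ∫_{p = 0} q`, so `∫_{p = 0} q ≤ γ (⟨q p^γ₀⟩/γ₀ - (⟨q p^γ⟩ - 1)/γ)`,
which tends to `0`.
Once this is known, the NB-DPD is an algebraic combination of the quotients in (i)–(v).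
-/

/-- Bernoulli's inequality `1 + (b/a) s ≤ (1 + s)^(b/a)` with `1 + s = t^a`. -/
lemma rpow_sub_one_div_le_rpow_sub_one_div {t : ℝ} (ht : 0 ≤ t) {a b : ℝ} (ha : 0 < a)
    (hab : a ≤ b) : (t ^ a - 1) / a ≤ (t ^ b - 1) / b := by
  have hb : 0 < b := ha.trans_le hab
  rw [div_le_div_iff₀ ha hb]
  rcases ht.eq_or_lt with rfl | ht
  · rw [zero_rpow ha.ne', zero_rpow hb.ne']
    linarith
  have hbern := one_add_mul_self_le_rpow_one_add (s := t ^ a - 1)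
    (by linarith [rpow_nonneg ht.le a]) ((one_le_div ha).2 hab)
  rw [add_sub_cancel, ← rpow_mul ht.le, mul_div_cancel₀ b ha.ne'] at hbern
  have hscaled := mul_le_mul_of_nonneg_right hbern ha.le
  have hcancel : b / a * (t ^ a - 1) * a = b * (t ^ a - 1) := by field_simp
  linarith

lemma mul_rpow_sub_one_le {s t : ℝ} (hs : 0 ≤ s) (ht : 0 ≤ t) {γ γ₀ : ℝ} (hγ : 0 < γ)
    (hγγ₀ : γ ≤ γ₀) : s * t ^ γ - s ≤ γ / γ₀ * (s * t ^ γ₀) - if t = 0 then s else 0 := by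
  have hγ₀ : 0 < γ₀ := hγ.trans_le hγγ₀
  split_ifs with ht0
  · simp [ht0, zero_rpow hγ.ne', zero_rpow hγ₀.ne']
  have hle : (t ^ γ - 1) / γ ≤ t ^ γ₀ / γ₀ :=
    (rpow_sub_one_div_le_rpow_sub_one_div ht hγ hγγ₀).trans
      (div_le_div_of_nonneg_right (sub_le_self _ zero_le_one) hγ₀.le)
  calc s * t ^ γ - s = γ * (s * ((t ^ γ - 1) / γ)) := by field_simp
    _ ≤ γ * (s * (t ^ γ₀ / γ₀)) := by gcongr
    _ = γ / γ₀ * (s * t ^ γ₀) - 0 := by ring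

section AbsolutelyContinuous

variable {X : Type*} [MeasurableSpace X] {ν : Measure X} {p q : X → ℝ}

lemma setIntegral_setOf_eq_zero_le (hp : Measurable p) (hp0 : ∀ x, 0 ≤ p x)
    (hq0 : ∀ x, 0 ≤ q x) (hq : Integrable q ν) {γ γ₀ : ℝ} (hγ : 0 < γ) (hγγ₀ : γ ≤ γ₀)
    (hint : Integrable (fun x => q x * p x ^ γ) ν)
    (hint₀ : Integrable (fun x => q x * p x ^ γ₀) ν) :
    ∫ x in {x | p x = 0}, q x ∂ν ≤
      γ * (crossInt ν γ₀ q p / γ₀ - (crossInt ν γ q p - ∫ x, q x ∂ν) / γ) := by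
  have hZ : MeasurableSet {x | p x = 0} := hp (measurableSet_singleton 0)
  have hmono : ∫ x, (q x * p x ^ γ - q x) ∂ν ≤
      ∫ x, (γ / γ₀ * (q x * p x ^ γ₀) - {x | p x = 0}.indicator q x) ∂ν :=
    integral_mono (hint.sub hq) ((hint₀.const_mul _).sub (hq.indicator hZ)) fun x => by
      simpa only [indicator_apply, mem_ofPred_eq] using mul_rpow_sub_one_le (hq0 x) (hp0 x) hγ hγγ₀
  rw [integral_sub hint hq, integral_sub (hint₀.const_mul _) (hq.indicator hZ),
    integral_const_mul, integral_indicator hZ] at hmono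
  rw [crossInt, crossInt, mul_sub, mul_div_cancel₀ _ hγ.ne', mul_div_left_comm]
  linarith

/-- On `{p = 0}` the integrand `q p^γ` vanishes for every `γ > 0`, so any mass of `q` there would
drive `(⟨q p^γ⟩ - ⟨q⟩)/γ` to `-∞`. -/
lemma ae_eq_zero_of_tendsto_crossInt (hp : Measurable p) (hp0 : ∀ x, 0 ≤ p x)
    (hq0 : ∀ x, 0 ≤ q x) (hq : Integrable q ν)
    (hint : ∀ᶠ γ in 𝓝[>] (0 : ℝ), Integrable (fun x => q x * p x ^ γ) ν) {L : ℝ}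
    (hL : Tendsto (fun γ => (crossInt ν γ q p - ∫ x, q x ∂ν) / γ) (𝓝[>] 0) (𝓝 L)) :
    ∀ᵐ x ∂ν, p x = 0 → q x = 0 := by
  obtain ⟨γ₀, hγ₀, hint_Ioc⟩ := mem_nhdsGT_iff_exists_Ioc_subset.mp hint
  have hZ : MeasurableSet {x | p x = 0} := hp (measurableSet_singleton 0)
  have hbound : ∀ᶠ γ in 𝓝[>] 0, ∫ x in {x | p x = 0}, q x ∂ν ≤
      γ * (crossInt ν γ₀ q p / γ₀ - (crossInt ν γ q p - ∫ x, q x ∂ν) / γ) := by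
    filter_upwards [Ioc_mem_nhdsGT_of_mem ⟨le_rfl, hγ₀⟩] with γ hγ
    exact setIntegral_setOf_eq_zero_le hp hp0 hq0 hq hγ.1 hγ.2 (hint_Ioc hγ)
      (hint_Ioc ⟨hγ₀, le_rfl⟩)
  have hlim : Tendsto (fun γ => γ * (crossInt ν γ₀ q p / γ₀ -
      (crossInt ν γ q p - ∫ x, q x ∂ν) / γ)) (𝓝[>] 0) (𝓝 0) := by
    simpa using (tendsto_nhdsWithin_of_tendsto_nhds tendsto_id).mul (tendsto_const_nhds.sub hL)
  have hzero : ∫ x in {x | p x = 0}, q x ∂ν = 0 :=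
    le_antisymm (ge_of_tendsto hlim hbound) (setIntegral_nonneg hZ fun x _ => hq0 x)
  rw [setIntegral_eq_zero_iff_of_nonneg_ae (ae_of_all _ hq0) hq.integrableOn,
    EventuallyEq, ae_restrict_iff' hZ] at hzero
  exact hzero

lemma integral_mul_log_div (hqlogq : Integrable (fun x => q x * log (q x)) ν)
    (hqlogp : Integrable (fun x => q x * log (p x)) ν) (hac : ∀ᵐ x ∂ν, p x = 0 → q x = 0) :
    ∫ x, q x * log (q x / p x) ∂ν = ∫ x, q x * log (q x) ∂ν - ∫ x, q x * log (p x) ∂ν := by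
  rw [← integral_sub hqlogq hqlogp]
  refine integral_congr_ae (hac.mono fun x hx => ?_)
  by_cases hqx : q x = 0
  · simp [hqx]
  show q x * log (q x / p x) = q x * log (q x) - q x * log (p x)
  rw [log_div hqx (mt hx hqx), mul_sub]

end AbsolutelyContinuous

theorem nbdpd_tendsto_kl_general {X : Type*} [MeasurableSpace X] (ν : Measure X)
    (φ : ℝ → ℝ → ℝ)
    (p q : X → ℝ) (hp : IsProbDensity ν p) (hq : IsProbDensity ν q)
    (c : ℝ)
    (hfin : ∀ᶠ γ in 𝓝[>] (0:ℝ), 0 < powInt ν γ p ∧ 0 < powInt ν γ q ∧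
      Integrable (fun x => p x ^ (1 + γ)) ν ∧ Integrable (fun x => q x ^ (1 + γ)) ν ∧
      Integrable (fun x => q x * p x ^ γ) ν)
    (hqlogp : Integrable (fun x => q x * Real.log (p x)) ν)
    (hqlogq : Integrable (fun x => q x * Real.log (q x)) ν)
    (h1 : Tendsto (fun γ => (crossInt ν γ q p - 1) / γ) (𝓝[>] (0:ℝ))
      (𝓝 (∫ x, q x * Real.log (p x) ∂ν)))
    (h2p : Tendsto (fun γ => (powInt ν γ p - 1) / γ) (𝓝[>] (0:ℝ))
      (𝓝 (∫ x, p x * Real.log (p x) ∂ν)))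
    (h3p : Tendsto (fun γ => lnorm ν γ p ^ γ) (𝓝[>] (0:ℝ)) (𝓝 1))
    (h4p : Tendsto (fun γ => deriv (φ γ) (lnorm ν γ p)) (𝓝[>] (0:ℝ)) (𝓝 (deriv (φ 0) 1)))
    (h5p : Tendsto (fun γ => (φ γ (lnorm ν γ p) - φ 0 1) / γ) (𝓝[>] (0:ℝ))
      (𝓝 (deriv (φ 0) 1 * (∫ x, p x * Real.log (p x) ∂ν) + c)))
    (h5q : Tendsto (fun γ => (φ γ (lnorm ν γ q) - φ 0 1) / γ) (𝓝[>] (0:ℝ))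
      (𝓝 (deriv (φ 0) 1 * (∫ x, q x * Real.log (q x) ∂ν) + c))) :
    Tendsto (fun γ => DNB ν φ γ q p) (𝓝[>] (0:ℝ))
      (𝓝 (deriv (φ 0) 1 * ∫ x, q x * Real.log (q x / p x) ∂ν)) := by
  obtain ⟨hpm, hp0, -⟩ := hp
  obtain ⟨-, hq0, hq1⟩ := hq
  have hqi : Integrable q ν := Integrable.of_integral_ne_zero (hq1 ▸ one_ne_zero)
  have hac : ∀ᵐ x ∂ν, p x = 0 → q x = 0 :=
    ae_eq_zero_of_tendsto_crossInt hpm hp0 hq0 hqi (hfin.mono fun _ h => h.2.2.2.2)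
      (by rwa [hq1])
  have hDNB : (fun γ => DNB ν φ γ q p) = fun γ =>
      ((φ γ (lnorm ν γ q) - φ 0 1) / γ - (φ γ (lnorm ν γ p) - φ 0 1) / γ) -
        deriv (φ γ) (lnorm ν γ p) *
          (((crossInt ν γ q p - 1) / γ - (powInt ν γ p - 1) / γ) / lnorm ν γ p ^ γ) := by
    funext γ
    rw [DNB]
    ring
  have hKL : deriv (φ 0) 1 * ∫ x, q x * log (q x / p x) ∂ν =
      ((deriv (φ 0) 1 * (∫ x, q x * log (q x) ∂ν) + c) -
        (deriv (φ 0) 1 * (∫ x, p x * log (p x) ∂ν) + c)) -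
      deriv (φ 0) 1 * (((∫ x, q x * log (p x) ∂ν) - ∫ x, p x * log (p x) ∂ν) / 1) := by
    rw [integral_mul_log_div hqlogq hqlogp hac]
    ring
  rw [hDNB, hKL]
  exact (h5q.sub h5p).sub (h4p.mul ((h1.sub h2p).div h3p one_ne_zero))

/-- as `γ → 0⁺`, the NB-DPD converges to a constant multiple of the
Kullback–Leibler divergence: `lim_{γ→0⁺} D^{NB}_{φ,γ}(q,p) = φ_0'(1)·⟨q log (q/p)⟩`. -/
theorem nbdpd_tendsto_kl {X : Type*} [MeasurableSpace X] (ν : Measure X) [SigmaFinite ν]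
    (φ : ℝ → ℝ → ℝ) (hφdiff : ∀ γ : ℝ, Differentiable ℝ (φ γ))
    (p q : X → ℝ) (hp : IsProbDensity ν p) (hq : IsProbDensity ν q)
    (c : ℝ)
    (hfin : ∀ᶠ γ in 𝓝[>] (0:ℝ), 0 < powInt ν γ p ∧ 0 < powInt ν γ q ∧
      Integrable (fun x => p x ^ (1 + γ)) ν ∧ Integrable (fun x => q x ^ (1 + γ)) ν ∧
      Integrable (fun x => q x * p x ^ γ) ν)
    (hqlogp : Integrable (fun x => q x * Real.log (p x)) ν)
    (hqlogq : Integrable (fun x => q x * Real.log (q x)) ν)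
    (hplogp : Integrable (fun x => p x * Real.log (p x)) ν)
    (h1 : Tendsto (fun γ => (crossInt ν γ q p - 1) / γ) (𝓝[>] (0:ℝ))
      (𝓝 (∫ x, q x * Real.log (p x) ∂ν)))
    (h2p : Tendsto (fun γ => (powInt ν γ p - 1) / γ) (𝓝[>] (0:ℝ))
      (𝓝 (∫ x, p x * Real.log (p x) ∂ν)))
    (h2q : Tendsto (fun γ => (powInt ν γ q - 1) / γ) (𝓝[>] (0:ℝ))
      (𝓝 (∫ x, q x * Real.log (q x) ∂ν)))
    (h3p : Tendsto (fun γ => lnorm ν γ p ^ γ) (𝓝[>] (0:ℝ)) (𝓝 1))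
    (h3q : Tendsto (fun γ => lnorm ν γ q ^ γ) (𝓝[>] (0:ℝ)) (𝓝 1))
    (h4p : Tendsto (fun γ => deriv (φ γ) (lnorm ν γ p)) (𝓝[>] (0:ℝ)) (𝓝 (deriv (φ 0) 1)))
    (h4q : Tendsto (fun γ => deriv (φ γ) (lnorm ν γ q)) (𝓝[>] (0:ℝ)) (𝓝 (deriv (φ 0) 1)))
    (h5p : Tendsto (fun γ => (φ γ (lnorm ν γ p) - φ 0 1) / γ) (𝓝[>] (0:ℝ))
      (𝓝 (deriv (φ 0) 1 * (∫ x, p x * Real.log (p x) ∂ν) + c)))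
    (h5q : Tendsto (fun γ => (φ γ (lnorm ν γ q) - φ 0 1) / γ) (𝓝[>] (0:ℝ))
      (𝓝 (deriv (φ 0) 1 * (∫ x, q x * Real.log (q x) ∂ν) + c))) :
    Tendsto (fun γ => DNB ν φ γ q p) (𝓝[>] (0:ℝ))
      (𝓝 (deriv (φ 0) 1 * ∫ x, q x * Real.log (q x / p x) ∂ν)) :=
  nbdpd_tendsto_kl_general ν φ p q hp hq c hfin hqlogp hqlogq h1 h2p h3p h4p h5p h5q
end

section
/- Let γ > 0, λ₁ > 0, and let p, q be probability densities with ⟨p^{1+γ}⟩ < ∞ and ⟨q p^γ⟩ < ∞. Then the pseudo-spherical-type bridge density power cross-entropy converges, as λ₂ → 0⁺, to a positive constant multiple of the density power cross-entropy: lim_{λ₂→0⁺} d^{BDP}_{(λ₁,λ₂),γ}(q,p) = (λ₁^{−γ/(1+γ)}/(1+γ))·d^{DP}_γ(q,p). -/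
open MeasureTheory Filter Real Topology Set

/-- The pseudo-spherical-type bridge density power cross-entropy (PS-type BDPCE). -/
noncomputable def dBDP {X : Type*} [MeasurableSpace X] (ν : Measure X) (l1 l2 γ : ℝ)
    (q p : X → ℝ) : ℝ :=
  -(1 / (l2 * γ)) * ((l1 + l2 * crossInt ν γ q p) / (l1 + l2 * powInt ν γ p) ^ (γ / (1 + γ)) -
    (l1 + l2) ^ ((1:ℝ) / (1 + γ)))

/-- The density power cross-entropy (DPCE):
`d^{DP}_γ(q,p) = −((1+γ)/γ)⟨q p^γ⟩ + 1/γ + ⟨p^{1+γ}⟩`. -/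
noncomputable def dDP {X : Type*} [MeasurableSpace X] (ν : Measure X) (γ : ℝ)
    (q p : X → ℝ) : ℝ :=
  -((1 + γ) / γ) * crossInt ν γ q p + 1 / γ + powInt ν γ p

/-! The integrals ⟨q p^γ⟩ and ⟨p^{1+γ}⟩ enter only as two real numbers `a`, `b`. With
`f(t) = (λ₁ + t a)/(λ₁ + t b)^{γ/(1+γ)} - (λ₁ + t)^{1/(1+γ)}` we have `f(0) = 0`, so
`d^{BDP}_{(λ₁,t),γ} = -f(t)/(tγ)` is a difference quotient of `f` at `0` and tends to `-f'(0)/γ`,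
which is `λ₁^{-γ/(1+γ)}/(1+γ)` times `d^{DP}_γ`. -/

theorem hasDerivAt_div_rpow_sub_rpow_zero {l1 : ℝ} (hl1 : 0 < l1) (a b c d : ℝ) :
    HasDerivAt (fun t => (l1 + t * a) / (l1 + t * b) ^ c - (l1 + t) ^ d)
      (l1 ^ (-c) * (a - c * b) - d * l1 ^ (d - 1)) 0 := by
  have hnum : HasDerivAt (fun t : ℝ => l1 + t * a) a 0 := by
    simpa using ((hasDerivAt_id (0 : ℝ)).mul_const a).const_add l1
  have hbase : HasDerivAt (fun t : ℝ => l1 + t * b) b 0 := by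
    simpa using ((hasDerivAt_id (0 : ℝ)).mul_const b).const_add l1
  have hden := hbase.rpow_const (p := c) (Or.inl (by simpa using hl1.ne'))
  have hshift : HasDerivAt (fun t : ℝ => (l1 + t) ^ d) (1 * d * (l1 + 0) ^ (d - 1)) 0 :=
    ((hasDerivAt_id (0 : ℝ)).const_add l1).rpow_const (Or.inl (by simpa using hl1.ne'))
  have hl1c : l1 ^ c ≠ 0 := (rpow_pos_of_pos hl1 c).ne'
  refine ((hnum.div hden (by simpa using hl1c)).sub hshift).congr_deriv ?_
  simp only [zero_mul, add_zero, one_mul]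
  rw [rpow_neg hl1.le, rpow_sub_one hl1.ne']
  field_simp

theorem tendsto_bdpce_formula_nhdsGT_zero {γ l1 : ℝ} (hγ : 0 < γ) (hl1 : 0 < l1) (a b : ℝ) :
    Tendsto (fun t => -(1 / (t * γ)) *
        ((l1 + t * a) / (l1 + t * b) ^ (γ / (1 + γ)) - (l1 + t) ^ ((1 : ℝ) / (1 + γ))))
      (𝓝[>] 0) (𝓝 (l1 ^ (-(γ / (1 + γ))) / (1 + γ) * (-((1 + γ) / γ) * a + 1 / γ + b))) := by
  have h1γ : (0 : ℝ) < 1 + γ := by linarith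
  have hexp : (1 : ℝ) / (1 + γ) - 1 = -(γ / (1 + γ)) := by field_simp; ring
  have hzero : l1 / l1 ^ (γ / (1 + γ)) = l1 ^ ((1 : ℝ) / (1 + γ)) := by
    rw [div_eq_iff (rpow_pos_of_pos hl1 _).ne', ← rpow_add hl1, ← add_div, div_self h1γ.ne',
      rpow_one]
  have hslope := (hasDerivAt_div_rpow_sub_rpow_zero hl1 a b (γ / (1 + γ))
    (1 / (1 + γ))).tendsto_slope_zero_right
  have hlim : -(1 / γ) * (l1 ^ (-(γ / (1 + γ))) * (a - γ / (1 + γ) * b) -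
      1 / (1 + γ) * l1 ^ ((1 : ℝ) / (1 + γ) - 1)) =
      l1 ^ (-(γ / (1 + γ))) / (1 + γ) * (-((1 + γ) / γ) * a + 1 / γ + b) := by
    rw [hexp]
    field_simp
    ring
  rw [← hlim]
  refine (hslope.const_mul (-(1 / γ))).congr fun t => ?_
  simp only [zero_add, zero_mul, add_zero, hzero, sub_self, sub_zero, smul_eq_mul]
  field_simp

theorem bdpce_tendsto_dpce_general {X : Type*} [MeasurableSpace X] (ν : Measure X)
    (γ l1 : ℝ) (hγ : 0 < γ) (hl1 : 0 < l1)
    (p q : X → ℝ) :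
    Tendsto (fun l2 => dBDP ν l1 l2 γ q p) (𝓝[>] (0:ℝ))
      (𝓝 (l1 ^ (-(γ / (1 + γ))) / (1 + γ) * dDP ν γ q p)) :=
  tendsto_bdpce_formula_nhdsGT_zero hγ hl1 _ _

/-- as `λ₂ → 0⁺`, the PS-type BDPCE converges to a positive constant multiple
of the density power cross-entropy. -/
theorem bdpce_tendsto_dpce {X : Type*} [MeasurableSpace X] (ν : Measure X)
    [SigmaFinite ν] (γ l1 : ℝ) (hγ : 0 < γ) (hl1 : 0 < l1)
    (p q : X → ℝ) (hp : IsProbDensity ν p) (hq : IsProbDensity ν q)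
    (hpI : Integrable (fun x => p x ^ (1 + γ)) ν)
    (hqpI : Integrable (fun x => q x * p x ^ γ) ν) :
    Tendsto (fun l2 => dBDP ν l1 l2 γ q p) (𝓝[>] (0:ℝ))
      (𝓝 (l1 ^ (-(γ / (1 + γ))) / (1 + γ) * dDP ν γ q p)) :=
  bdpce_tendsto_dpce_general ν γ l1 hγ hl1 p q
end

section
/- Let γ > 0, λ₁ ≥ 0, λ₂ > 0 with λ₁ + λ₂ > 0, and let p, q be probability densities with ⟨p^{1+γ}⟩ < ∞, ⟨q p^γ⟩ < ∞, λ₁ + λ₂⟨q p^γ⟩ > 0 and λ₁ + λ₂⟨p^{1+γ}⟩ > 0. Define ξ(z) = −((1+γ)/(λ₂γ))·log(−λ₂γ z + (λ₁+λ₂)^{1/(1+γ)}) − (1/(λ₂γ))·log(λ₁+λ₂). Then: (a) ξ is strictly increasing on {z : −λ₂γ z + (λ₁+λ₂)^{1/(1+γ)} > 0}; (b) the log-type bridge density power cross-entropy equals ξ applied to the pseudo-spherical-type bridge density power cross-entropy: d̃^{BDP}_{(λ₁,λ₂),γ}(q,p) = ξ(d^{BDP}_{(λ₁,λ₂),γ}(q,p)).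 In particular the two cross-entropies are equivalent, i.e., they have the same minimizers in p. -/
open MeasureTheory Filter Real Topology Set

/-- The log-type bridge density power cross-entropy:
`d̃^{BDP}_{(λ₁,λ₂),γ}(q,p) = −((1+γ)/(λ₂γ)) log(λ₁+λ₂⟨q p^γ⟩) + (1/λ₂) log(λ₁+λ₂⟨p^{1+γ}⟩)
  − (1/(λ₂γ)) log(λ₁+λ₂)`. -/
noncomputable def dLogBDP {X : Type*} [MeasurableSpace X] (ν : Measure X) (l1 l2 γ : ℝ)
    (q p : X → ℝ) : ℝ :=
  -((1 + γ) / (l2 * γ)) * Real.log (l1 + l2 * crossInt ν γ q p) +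
    (1 / l2) * Real.log (l1 + l2 * powInt ν γ p) - (1 / (l2 * γ)) * Real.log (l1 + l2)


/-!
Both cross-entropies are functions of the single ratio `R = (λ₁ + λ₂⟨q p^γ⟩) / (λ₁ + λ₂⟨p^{1+γ}⟩)^{γ/(1+γ)}`:
the PS-type one is the affine function `((λ₁ + λ₂)^{1/(1+γ)} - R) / (λ₂γ)`, and the log-type one is
`-((1+γ)/(λ₂γ)) log R - (1/(λ₂γ)) log(λ₁ + λ₂)`. So `ξ` undoes the affine map and then applies the
logarithmic one; it is increasing as a composition of two decreasing maps.
-/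

theorem strictMonoOn_neg_mul_log_neg_mul_add_sub {a b c : ℝ} (ha : 0 < a) (hc : 0 < c) (d : ℝ) :
    StrictMonoOn (fun z => -c * Real.log (-(a * z) + b) - d) {z | 0 < -(a * z) + b} := by
  intro x _ y hy hxy
  have hlog : Real.log (-(a * y) + b) < Real.log (-(a * x) + b) :=
    Real.log_lt_log hy (by linarith [mul_lt_mul_of_pos_left hxy ha])
  linarith [mul_lt_mul_of_pos_left hlog hc]

section BDPCE

variable {X : Type*} [MeasurableSpace X] (ν : Measure X) {l1 l2 γ : ℝ} (q p : X → ℝ)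

theorem neg_mul_dBDP_add_rpow_eq_div (hl2 : l2 ≠ 0) (hγ : γ ≠ 0) :
    -(l2 * γ * dBDP ν l1 l2 γ q p) + (l1 + l2) ^ ((1:ℝ) / (1 + γ)) =
      (l1 + l2 * crossInt ν γ q p) / (l1 + l2 * powInt ν γ p) ^ (γ / (1 + γ)) := by
  rw [dBDP]
  field_simp
  ring

theorem dLogBDP_eq_neg_mul_log_div_rpow (hl2 : l2 ≠ 0) (hγ : γ ≠ 0) (hγ1 : 1 + γ ≠ 0)
    (hA : l1 + l2 * crossInt ν γ q p ≠ 0) (hB : 0 < l1 + l2 * powInt ν γ p) :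
    dLogBDP ν l1 l2 γ q p =
      -((1 + γ) / (l2 * γ)) * Real.log ((l1 + l2 * crossInt ν γ q p) /
        (l1 + l2 * powInt ν γ p) ^ (γ / (1 + γ))) - (1 / (l2 * γ)) * Real.log (l1 + l2) := by
  rw [Real.log_div hA (Real.rpow_pos_of_pos hB _).ne', Real.log_rpow hB, dLogBDP]
  field_simp
  ring

end BDPCE

theorem log_bdpce_eq_xi_of_ps_bdpce_general {X : Type*} [MeasurableSpace X] (ν : Measure X)
    (γ l1 l2 : ℝ) (hγ : 0 < γ) (hl2 : 0 < l2)
    (p q : X → ℝ)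
    (hA : 0 < l1 + l2 * crossInt ν γ q p)
    (hB : 0 < l1 + l2 * powInt ν γ p) :
    let ξ : ℝ → ℝ := fun z =>
      -((1 + γ) / (l2 * γ)) * Real.log (-(l2 * γ * z) + (l1 + l2) ^ ((1:ℝ) / (1 + γ))) -
        (1 / (l2 * γ)) * Real.log (l1 + l2)
    StrictMonoOn ξ {z | 0 < -(l2 * γ * z) + (l1 + l2) ^ ((1:ℝ) / (1 + γ))} ∧
    dLogBDP ν l1 l2 γ q p = ξ (dBDP ν l1 l2 γ q p) := by
  refine ⟨strictMonoOn_neg_mul_log_neg_mul_add_sub (mul_pos hl2 hγ) (by positivity) _, ?_⟩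
  beta_reduce
  rw [dLogBDP_eq_neg_mul_log_div_rpow ν q p hl2.ne' hγ.ne' (by positivity) hA.ne' hB,
    neg_mul_dBDP_add_rpow_eq_div ν q p hl2.ne' hγ.ne']

/-- the map `ξ(z) = −((1+γ)/(λ₂γ)) log(−λ₂γz + (λ₁+λ₂)^{1/(1+γ)})
− (1/(λ₂γ)) log(λ₁+λ₂)` is strictly increasing where its argument is positive, and it
carries the PS-type BDPCE to the log-type BDPCE. -/
theorem log_bdpce_eq_xi_of_ps_bdpce {X : Type*} [MeasurableSpace X] (ν : Measure X)
    [SigmaFinite ν] (γ l1 l2 : ℝ) (hγ : 0 < γ) (hl1 : 0 ≤ l1) (hl2 : 0 < l2)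
    (hl12 : 0 < l1 + l2)
    (p q : X → ℝ) (hp : IsProbDensity ν p) (hq : IsProbDensity ν q)
    (hpI : Integrable (fun x => p x ^ (1 + γ)) ν)
    (hqpI : Integrable (fun x => q x * p x ^ γ) ν)
    (hA : 0 < l1 + l2 * crossInt ν γ q p)
    (hB : 0 < l1 + l2 * powInt ν γ p) :
    let ξ : ℝ → ℝ := fun z =>
      -((1 + γ) / (l2 * γ)) * Real.log (-(l2 * γ * z) + (l1 + l2) ^ ((1:ℝ) / (1 + γ))) -
        (1 / (l2 * γ)) * Real.log (l1 + l2)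
    StrictMonoOn ξ {z | 0 < -(l2 * γ * z) + (l1 + l2) ^ ((1:ℝ) / (1 + γ))} ∧
    dLogBDP ν l1 l2 γ q p = ξ (dBDP ν l1 l2 γ q p) :=
  log_bdpce_eq_xi_of_ps_bdpce_general ν γ l1 l2 hγ hl2 p q hA hB
end

section
/- Let γ > 0, κ ≥ 1, λ₁ > 0, and let p, q be probability densities with ⟨p^{1+γ}⟩ < ∞ and ⟨q p^γ⟩ < ∞. Then the combined cross-entropy converges, as λ₂ → 0⁺, to a positive constant multiple of the density power cross-entropy: lim_{λ₂→0⁺} d_{(λ₁,λ₂),κ,γ}(q,p) = (κ·λ₁^{κ/(1+γ)−1}/(1+γ))·d^{DP}_γ(q,p). -/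
open MeasureTheory Filter Real Topology Set

/-- The combined cross-entropy (connecting the Bregman–Hölder and bridge density power
families): `d_{(λ₁,λ₂),κ,γ}(q,p) = (κ/(λ₂γ))(λ₁+λ₂⟨p^{1+γ}⟩)^{κ/(1+γ)}
  [1 − 1/κ − (λ₁+λ₂⟨q p^γ⟩)/(λ₁+λ₂⟨p^{1+γ}⟩)] + (1/(λ₂γ))(λ₁+λ₂)^{κ/(1+γ)}`. -/
noncomputable def dComb {X : Type*} [MeasurableSpace X] (ν : Measure X) (l1 l2 κ γ : ℝ)
    (q p : X → ℝ) : ℝ :=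
  κ / (l2 * γ) * (l1 + l2 * powInt ν γ p) ^ (κ / (1 + γ)) *
      (1 - 1 / κ - (l1 + l2 * crossInt ν γ q p) / (l1 + l2 * powInt ν γ p)) +
    1 / (l2 * γ) * (l1 + l2) ^ (κ / (1 + γ))


/-!
After clearing the denominator `λ₂γ`, the combined cross-entropy is `N(λ₂) / (λ₂γ)` where
`N(t) = (κ-1) g(t)^c - κ g(t)^(c-1) h(t) + k(t)^c`, `c = κ/(1+γ)`, for the affine functions
`g(t) = λ₁ + t⟨p^{1+γ}⟩`, `h(t) = λ₁ + t⟨q p^γ⟩`, `k(t) = λ₁ + t`. Since `N(0) = 0`, the limit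
as `λ₂ → 0` is `N'(0)/γ`, which the chain rule identifies with the stated multiple of the DPCE.
-/

section CombinedLimit

variable (l1 κ γ A B : ℝ)

/-- `dComb` as a function of `t = λ₂` and of the integrals `A = ⟨p^{1+γ}⟩`, `B = ⟨q p^γ⟩`. -/
noncomputable def combinedCE (t : ℝ) : ℝ :=
  κ / (t * γ) * (l1 + t * A) ^ (κ / (1 + γ)) * (1 - 1 / κ - (l1 + t * B) / (l1 + t * A)) +
    1 / (t * γ) * (l1 + t) ^ (κ / (1 + γ))

noncomputable def combinedCENumerator (t : ℝ) : ℝ :=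
  (κ - 1) * (l1 + t * A) ^ (κ / (1 + γ)) -
    κ * ((l1 + t * A) ^ (κ / (1 + γ) - 1) * (l1 + t * B)) + (l1 + t) ^ (κ / (1 + γ))

variable {l1 κ γ A B}

theorem hasDerivAt_const_add_mul_rpow (hl1 : l1 ≠ 0) (c : ℝ) :
    HasDerivAt (fun t : ℝ => (l1 + t * A) ^ c) (A * c * l1 ^ (c - 1)) 0 := by
  have hg : HasDerivAt (fun t : ℝ => l1 + t * A) A 0 := by
    simpa using ((hasDerivAt_id (0 : ℝ)).mul_const A).const_add l1
  simpa using hg.rpow_const (Or.inl (by simpa using hl1))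

theorem combinedCENumerator_zero (hl1 : l1 ≠ 0) : combinedCENumerator l1 κ γ A B 0 = 0 := by
  have : l1 ^ (κ / (1 + γ) - 1) * l1 = l1 ^ (κ / (1 + γ)) := by
    rw [rpow_sub_one hl1, div_mul_cancel₀ _ hl1]
  simp only [combinedCENumerator, zero_mul, add_zero, this]
  linarith

theorem hasDerivAt_combinedCENumerator (hγ : 1 + γ ≠ 0) (hl1 : l1 ≠ 0) :
    HasDerivAt (combinedCENumerator l1 κ γ A B)
      (κ / (1 + γ) * l1 ^ (κ / (1 + γ) - 1) * (1 + γ * A - (1 + γ) * B)) 0 := by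
  set c := κ / (1 + γ)
  have hgh : HasDerivAt (fun t : ℝ => (l1 + t * A) ^ (c - 1) * (l1 + t * B))
      (A * (c - 1) * l1 ^ (c - 1 - 1) * l1 + l1 ^ (c - 1) * B) 0 :=
    ((hasDerivAt_const_add_mul_rpow hl1 _).mul
      (((hasDerivAt_id (0 : ℝ)).mul_const B).const_add l1)).congr_deriv (by simp)
  have hk : HasDerivAt (fun t : ℝ => (l1 + t) ^ c) (1 * c * l1 ^ (c - 1)) 0 := by
    simpa using hasDerivAt_const_add_mul_rpow (A := 1) hl1 c
  refine ((((hasDerivAt_const_add_mul_rpow hl1 c).const_mul (κ - 1)).sub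
    (hgh.const_mul κ)).add hk).congr_deriv ?_
  have hκ : κ = c * (1 + γ) := (div_mul_cancel₀ κ hγ).symm
  rw [rpow_sub_one hl1 (c - 1), hκ]
  field_simp
  ring

theorem combinedCE_eq_combinedCENumerator_div {t : ℝ} (hγ : γ ≠ 0) (hκ : κ ≠ 0) (ht : t ≠ 0)
    (hg : l1 + t * A ≠ 0) :
    combinedCE l1 κ γ A B t = combinedCENumerator l1 κ γ A B t / (t * γ) := by
  rw [combinedCE, combinedCENumerator, rpow_sub_one hg]
  field_simp

theorem tendsto_combinedCE (hγ : γ ≠ 0) (hγ' : 1 + γ ≠ 0) (hκ : κ ≠ 0) (hl1 : l1 ≠ 0) :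
    Tendsto (combinedCE l1 κ γ A B) (𝓝[≠] 0)
      (𝓝 (κ * l1 ^ (κ / (1 + γ) - 1) / (1 + γ) * (-((1 + γ) / γ) * B + 1 / γ + A))) := by
  have hslope := (hasDerivAt_iff_tendsto_slope_zero.mp
    (hasDerivAt_combinedCENumerator (κ := κ) (A := A) (B := B) hγ' hl1)).div_const γ
  have hlim : κ / (1 + γ) * l1 ^ (κ / (1 + γ) - 1) * (1 + γ * A - (1 + γ) * B) / γ =
      κ * l1 ^ (κ / (1 + γ) - 1) / (1 + γ) * (-((1 + γ) / γ) * B + 1 / γ + A) := by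
    field_simp
    ring
  have hg : ∀ᶠ t in 𝓝 (0 : ℝ), l1 + t * A ≠ 0 :=
    (continuousAt_const.add (continuousAt_id.mul continuousAt_const)).eventually_ne
      (by simpa using hl1)
  rw [← hlim]
  refine hslope.congr' ?_
  filter_upwards [nhdsWithin_le_nhds hg, self_mem_nhdsWithin] with t hgt ht
  rw [combinedCE_eq_combinedCENumerator_div hγ hκ ht hgt, zero_add, combinedCENumerator_zero hl1,
    sub_zero, smul_eq_mul]
  field_simp

end CombinedLimit

theorem dcomb_tendsto_dpce_general {X : Type*} [MeasurableSpace X] (ν : Measure X)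
    (γ κ l1 : ℝ) (hγ : 0 < γ) (hκ : 1 ≤ κ) (hl1 : 0 < l1)
    (p q : X → ℝ) :
    Tendsto (fun l2 => dComb ν l1 l2 κ γ q p) (𝓝[>] (0:ℝ))
      (𝓝 (κ * l1 ^ (κ / (1 + γ) - 1) / (1 + γ) * dDP ν γ q p)) :=
  (tendsto_combinedCE hγ.ne' (by linarith) (by linarith) hl1.ne').mono_left
    (nhdsWithin_mono 0 fun _ ht => ne_of_gt ht)

/-- as `λ₂ → 0⁺`, the combined cross-entropy converges to a positive constant
multiple of the density power cross-entropy. -/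
theorem dcomb_tendsto_dpce {X : Type*} [MeasurableSpace X] (ν : Measure X)
    [SigmaFinite ν] (γ κ l1 : ℝ) (hγ : 0 < γ) (hκ : 1 ≤ κ) (hl1 : 0 < l1)
    (p q : X → ℝ) (hp : IsProbDensity ν p) (hq : IsProbDensity ν q)
    (hpI : Integrable (fun x => p x ^ (1 + γ)) ν)
    (hqpI : Integrable (fun x => q x * p x ^ γ) ν) :
    Tendsto (fun l2 => dComb ν l1 l2 κ γ q p) (𝓝[>] (0:ℝ))
      (𝓝 (κ * l1 ^ (κ / (1 + γ) - 1) / (1 + γ) * dDP ν γ q p)) :=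
  dcomb_tendsto_dpce_general ν γ κ l1 hγ hκ hl1 p q
end

section
/- Let γ > 0 and let p, s : ℝ → ℝ be measurable, with p a probability density with respect to Lebesgue measure such that N := ‖p‖_{1+γ} ∈ (0,∞), B := ⟨p^{1+γ}⟩ ∈ (0,∞) and A := ⟨p^{1+γ} s⟩ ≠ 0. Let φ be twice differentiable at N, and define ψ(x) = −A·(N·φ''(N) − γ·φ'(N))·(p(x)^γ − B) − γ·φ'(N)·B·(p(x)^γ·s(x) − A). Assume lim_{x→∞} p(x)^γ = 0 and lim_{x→∞} p(x)^γ·s(x) = 0. Then the redescending property lim_{x→∞} ψ(x) = 0 holds if and only if φ''(N) = 0. In particular, if φ(z) = a·z + b with a > 0 (the pseudo-spherical / γ-divergence case) then lim_{x→∞} ψ(x) = 0. -/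
open MeasureTheory Filter Real Topology Set

/-- the redescending property `lim_{x→∞} ψ(x) = 0` of the NB-DPD
M-estimation ψ-function holds iff `φ''(N) = 0`; in particular it holds for
`φ(z) = a z + b`, `a > 0` (the pseudo-spherical / γ-divergence case). -/
theorem nbdpd_redescending_iff (γ : ℝ) (hγ : 0 < γ) (p s : ℝ → ℝ)
    (hpm : Measurable p) (hsm : Measurable s)
    (hp0 : ∀ x, 0 ≤ p x) (hp1 : ∫ x, p x = 1)
    (hBI : Integrable (fun x => p x ^ (1 + γ)))
    (hBpos : 0 < ∫ x, p x ^ (1 + γ))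
    (hAI : Integrable (fun x => p x ^ (1 + γ) * s x))
    (hAne : (∫ x, p x ^ (1 + γ) * s x) ≠ 0)
    (φ : ℝ → ℝ)
    (hφ1 : DifferentiableAt ℝ φ ((∫ x, p x ^ (1 + γ)) ^ (1 / (1 + γ))))
    (hφ2 : DifferentiableAt ℝ (deriv φ) ((∫ x, p x ^ (1 + γ)) ^ (1 / (1 + γ))))
    (hlim1 : Tendsto (fun x => p x ^ γ) atTop (𝓝 0))
    (hlim2 : Tendsto (fun x => p x ^ γ * s x) atTop (𝓝 0)) :
    let B : ℝ := ∫ x, p x ^ (1 + γ)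
    let N : ℝ := B ^ (1 / (1 + γ))
    let A : ℝ := ∫ x, p x ^ (1 + γ) * s x
    let ψ : ℝ → ℝ := fun x =>
      -A * (N * deriv (deriv φ) N - γ * deriv φ N) * (p x ^ γ - B) -
        γ * deriv φ N * B * (p x ^ γ * s x - A)
    (Tendsto ψ atTop (𝓝 0) ↔ deriv (deriv φ) N = 0) ∧
    (∀ a b : ℝ, 0 < a → φ = (fun z => a * z + b) → Tendsto ψ atTop (𝓝 0)) := by
  intro B N A ψ
  have hNpos : 0 < N := Real.rpow_pos_of_pos hBpos _
  set c1 : ℝ := deriv φ N with hc1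
  set c2 : ℝ := deriv (deriv φ) N with hc2
  have hlim : Tendsto ψ atTop (𝓝 (A * B * N * c2)) := by
    have h1 : Tendsto (fun x => -A * (N * c2 - γ * c1) * (p x ^ γ - B))
        atTop (𝓝 (-A * (N * c2 - γ * c1) * (0 - B))) :=
      Tendsto.const_mul _ (hlim1.sub_const B)
    have h2 : Tendsto (fun x => γ * c1 * B * (p x ^ γ * s x - A))
        atTop (𝓝 (γ * c1 * B * (0 - A))) :=
      Tendsto.const_mul _ (hlim2.sub_const A)
    have := h1.sub h2
    convert this using 1
    ring
  constructor
  · constructor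
    · intro h
      have heq : A * B * N * c2 = 0 := tendsto_nhds_unique hlim h
      have hB : B ≠ 0 := ne_of_gt hBpos
      have hN : N ≠ 0 := ne_of_gt hNpos
      have hABN : A * B * N ≠ 0 := mul_ne_zero (mul_ne_zero hAne hB) hN
      exact (mul_eq_zero.mp heq).resolve_left hABN
    · intro h
      rw [h] at hlim
      simpa using hlim
  · intro a b ha hφeq
    have hd1 : deriv φ = fun _ : ℝ => a := by
      funext z
      rw [hφeq, deriv_add_const, deriv_const_mul_field]
      simp
    have hd2 : c2 = 0 := by
      rw [hc2, hd1]
      simp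
    rw [hd2] at hlim
    simpa using hlim
end

section
/- Let γ > 0, λ₁ ≥ 0, λ₂ > 0, let p be a probability density with ⟨p^{1+γ}⟩ < ∞, let s : X → ℝ be measurable with ⟨p^{1+γ} s⟩ ∈ ℝ, and let x₁, …, x_n ∈ X with n ≥ 1. Set S_n = (1/n)·Σ_{i=1}^n p(x_i)^γ and assume λ₁ + λ₂·S_n > 0 and λ₁ + λ₂·⟨p^{1+γ}⟩ > 0. Then the functional density power divergence estimating equation for v(z) = (1/λ₂)·log(λ₁ + λ₂ z), namely −(1/(λ₁ + λ₂·S_n))·(1/n)·Σ_{i=1}^n p(x_i)^γ·s(x_i) + ⟨p^{1+γ} s⟩/(λ₁ + λ₂·⟨p^{1+γ}⟩) = 0, holds if and only if (1/n)·Σ_{i=1}^n ψ(x_i) = 0, where ψ(x) = −p(x)^γ·s(x)·(λ₁ + λ₂·⟨p^{1+γ}⟩) + ⟨p^{1+γ} s⟩·(λ₁ + λ₂·p(x)^γ). Hence the bridge density power divergence estimation problem reduces to M-estimation. -/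
open MeasureTheory Filter Real Topology Set

/-! Since `v'(z) = 1 / (λ₁ + λ₂ z)`, clearing the two positive denominators turns the estimating
equation into one that is affine in the empirical means `(1/n) ∑ pᵞ s` and `(1/n) ∑ pᵞ`,
i.e. into the empirical mean of `ψ`. -/

theorem neg_one_div_mul_add_div_eq_zero_iff {D₁ D₂ : ℝ} (hD₁ : D₁ ≠ 0) (hD₂ : D₂ ≠ 0)
    (A C : ℝ) : -(1 / D₁) * A + C / D₂ = 0 ↔ -A * D₂ + C * D₁ = 0 := by
  rw [show -(1 / D₁) * A + C / D₂ = (-A * D₂ + C * D₁) / (D₁ * D₂) by field_simp,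
    div_eq_zero_iff, or_iff_left (mul_ne_zero hD₁ hD₂)]

theorem mean_neg_mul_mul_add_mul_affine {n : ℕ} (hn : n ≠ 0) (f g : Fin n → ℝ) (a b c d : ℝ) :
    (1 / (n : ℝ)) * ∑ i, (-(f i) * g i * a + b * (c + d * f i)) =
      -((1 / (n : ℝ)) * ∑ i, f i * g i) * a + b * (c + d * ((1 / (n : ℝ)) * ∑ i, f i)) := by
  have hsum : ∑ i, (-(f i) * g i * a + b * (c + d * f i)) =
      -(∑ i, f i * g i) * a + b * (n * c + d * ∑ i, f i) := by
    rw [Finset.sum_add_distrib, ← Finset.mul_sum, Finset.sum_add_distrib, ← Finset.mul_sum,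
      ← Finset.sum_mul, Finset.sum_const, Finset.card_univ, Fintype.card_fin, nsmul_eq_mul]
    simp only [neg_mul, Finset.sum_neg_distrib]
  rw [hsum]
  field_simp

theorem bdpd_reduces_to_m_estimation_general {X : Type*} [MeasurableSpace X] (ν : Measure X)
    (γ l1 l2 : ℝ) (p : X → ℝ) (s : X → ℝ)
    (n : ℕ) (hn : 1 ≤ n) (x : Fin n → X)
    (hS : 0 < l1 + l2 * ((1 / (n : ℝ)) * ∑ i, p (x i) ^ γ))
    (hB : 0 < l1 + l2 * ∫ y, p y ^ (1 + γ) ∂ν) :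
    (-(1 / (l1 + l2 * ((1 / (n : ℝ)) * ∑ i, p (x i) ^ γ))) *
          ((1 / (n : ℝ)) * ∑ i, p (x i) ^ γ * s (x i)) +
        (∫ y, p y ^ (1 + γ) * s y ∂ν) / (l1 + l2 * ∫ y, p y ^ (1 + γ) ∂ν) = 0) ↔
      ((1 / (n : ℝ)) * ∑ i,
          (-(p (x i) ^ γ) * s (x i) * (l1 + l2 * ∫ y, p y ^ (1 + γ) ∂ν) +
            (∫ y, p y ^ (1 + γ) * s y ∂ν) * (l1 + l2 * p (x i) ^ γ)) = 0) := by
  rw [mean_neg_mul_mul_add_mul_affine (by omega) (fun i => p (x i) ^ γ) (fun i => s (x i))]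
  exact neg_one_div_mul_add_div_eq_zero_iff hS.ne' hB.ne' _ _

/-- the FDPD estimating equation for `v(z) = (1/λ₂) log(λ₁ + λ₂ z)` holds iff
the M-estimation equation `(1/n)∑ᵢ ψ(xᵢ) = 0` holds, with
`ψ(x) = −p(x)^γ s(x)(λ₁ + λ₂⟨p^{1+γ}⟩) + ⟨p^{1+γ}s⟩(λ₁ + λ₂ p(x)^γ)`; hence the bridge
density power divergence estimation problem reduces to M-estimation. -/
theorem bdpd_reduces_to_m_estimation {X : Type*} [MeasurableSpace X] (ν : Measure X)
    [SigmaFinite ν] (γ l1 l2 : ℝ) (hγ : 0 < γ) (hl1 : 0 ≤ l1) (hl2 : 0 < l2)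
    (p : X → ℝ) (hp : IsProbDensity ν p)
    (hpI : Integrable (fun y => p y ^ (1 + γ)) ν)
    (s : X → ℝ) (hsm : Measurable s)
    (hAI : Integrable (fun y => p y ^ (1 + γ) * s y) ν)
    (n : ℕ) (hn : 1 ≤ n) (x : Fin n → X)
    (hS : 0 < l1 + l2 * ((1 / (n : ℝ)) * ∑ i, p (x i) ^ γ))
    (hB : 0 < l1 + l2 * ∫ y, p y ^ (1 + γ) ∂ν) :
    (-(1 / (l1 + l2 * ((1 / (n : ℝ)) * ∑ i, p (x i) ^ γ))) *
          ((1 / (n : ℝ)) * ∑ i, p (x i) ^ γ * s (x i)) +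
        (∫ y, p y ^ (1 + γ) * s y ∂ν) / (l1 + l2 * ∫ y, p y ^ (1 + γ) ∂ν) = 0) ↔
      ((1 / (n : ℝ)) * ∑ i,
          (-(p (x i) ^ γ) * s (x i) * (l1 + l2 * ∫ y, p y ^ (1 + γ) ∂ν) +
            (∫ y, p y ^ (1 + γ) * s y ∂ν) * (l1 + l2 * p (x i) ^ γ)) = 0) :=
  bdpd_reduces_to_m_estimation_general ν γ l1 l2 p s n hn x hS hB
end
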